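/- arXiv:2310.02611 — 3 statements merged into one kernel-verified Lean document; each statement's English description precedes it below -/
import Mathlib

section
/- Let g₁ and g₂ be real-valued functions on ℝ that are non-decreasing, bounded below, differentiable, and strictly convex, normalized so that g₁(0) = g₂(0) = 0. Then the set Γ := { v ∈ C(Y) : L(v) ≤ 0 and v^{cc} = v } is equi-bounded and equi-Lipschitz; i.e., there exist constants M ≥ 0 and L' ≥ 0 such that every v ∈ Γ satisfies sup_{y∈Y} |v(y)| ≤ M and is L'-Lipschitz on Y. -/
/-!
Let `R` bound the distances in `X ∪ Y`. For `y ∈ Y` the map `x ↦ τ‖x - y‖²` is `2τR`-Lipschitz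
on `X`, and symmetrically, so the infimum `v^c` is `2τR`-Lipschitz on `X` and, since `v = v^{cc}`,
so is `v` on `Y`. Monotone strictly convex functions grow to `+∞`, so pick `T₁, T₂` with
`g₁ T₁ > -inf g₂` and `g₂ T₂ > -inf g₁`. If `v^c ≤ -T₁` on `X`, the first integral of `L(v)` is
at least `g₁ T₁` and the second at least `inf g₂`, contradicting `L(v) ≤ 0`; hence
`v^c(x₁) > -T₁` somewhere and `v = v^{cc} ≤ c(x₁, ·) - v^c(x₁) ≤ τR² + T₁`. Likewise
`v(y₁) > -T₂` somewhere, and the Lipschitz bound gives `v ≥ -T₂ - 2τR²` on `Y`.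
-/

open MeasureTheory Filter
open scoped ENNReal NNReal Topology

noncomputable section

/-- The quadratic transport cost `c(x,y) = τ‖x-y‖₂²`. -/
def cost {d : ℕ} (τ : ℝ) (x y : EuclideanSpace ℝ (Fin d)) : ℝ := τ * ‖x - y‖ ^ 2

/-- The `c`-transform `v^c(x) = inf_{y ∈ Y} (c(x,y) - v(y))`. -/
def ctransform {d : ℕ} (τ : ℝ) (Y : Set (EuclideanSpace ℝ (Fin d)))
    (v : EuclideanSpace ℝ (Fin d) → ℝ) (x : EuclideanSpace ℝ (Fin d)) : ℝ :=
  sInf ((fun y => cost τ x y - v y) '' Y)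

/-- The double `c`-transform `v^{cc}(y) = inf_{x ∈ X} (c(x,y) - v^c(x))`. -/
def cctransform {d : ℕ} (τ : ℝ) (X Y : Set (EuclideanSpace ℝ (Fin d)))
    (v : EuclideanSpace ℝ (Fin d) → ℝ) (y : EuclideanSpace ℝ (Fin d)) : ℝ :=
  sInf ((fun x => cost τ x y - ctransform τ Y v x) '' X)

/-- The semi-dual functional
`L(v) = ∫_X g₁(-v^c(x)) dμ(x) + ∫_Y g₂(-v(y)) dν(y)`. -/
def semidual {d : ℕ} (τ : ℝ) (X Y : Set (EuclideanSpace ℝ (Fin d)))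
    (μ ν : Measure (EuclideanSpace ℝ (Fin d))) (g₁ g₂ : ℝ → ℝ)
    (v : EuclideanSpace ℝ (Fin d) → ℝ) : ℝ :=
  (∫ x in X, g₁ (-(ctransform τ Y v x)) ∂μ) + ∫ y in Y, g₂ (-(v y)) ∂ν

theorem LipschitzOnWith.congr {α β : Type*} [PseudoEMetricSpace α] [PseudoEMetricSpace β]
    {K : ℝ≥0} {f g : α → β} {s : Set α} (hf : LipschitzOnWith K f s) (hfg : Set.EqOn f g s) :
    LipschitzOnWith K g s := fun x hx y hy => by
  rw [← hfg hx, ← hfg hy]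
  exact hf hx hy

theorem LipschitzOnWith.csInf_image {α β : Type*} [PseudoMetricSpace α] {f : α → β → ℝ}
    {s : Set α} {t : Set β} {K : ℝ≥0} (ht : t.Nonempty) (hbdd : ∀ x ∈ s, BddBelow (f x '' t))
    (hf : ∀ y ∈ t, LipschitzOnWith K (fun x => f x y) s) :
    LipschitzOnWith K (fun x => sInf (f x '' t)) s := by
  refine LipschitzOnWith.of_le_add_mul K fun x hx x' hx' => ?_
  rw [← sub_le_iff_le_add]
  refine le_csInf (ht.image _) ?_
  rintro _ ⟨y, hy, rfl⟩
  have := csInf_le (hbdd x hx) (Set.mem_image_of_mem _ hy)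
  linarith [(hf y hy).le_add_mul hx hx']

theorem bddBelow_image_sub {α : Type*} {c w : α → ℝ} {s : Set α} {B : ℝ}
    (hc : ∀ a ∈ s, 0 ≤ c a) (hw : ∀ a ∈ s, w a ≤ B) : BddBelow ((fun a => c a - w a) '' s) :=
  ⟨-B, by rintro _ ⟨a, ha, rfl⟩; linarith [hc a ha, hw a ha]⟩

theorem ConvexOn.tendsto_atTop_of_lt {g : ℝ → ℝ} (hg : ConvexOn ℝ Set.univ g) {a b : ℝ}
    (hab : a < b) (hgab : g a < g b) : Tendsto g atTop atTop := by
  set s := (g b - g a) / (b - a)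
  have hs : 0 < s := div_pos (sub_pos.2 hgab) (sub_pos.2 hab)
  have hlin : Tendsto (fun t => g b + s * (t - b)) atTop atTop :=
    tendsto_atTop_add_const_left _ _ <|
      (tendsto_atTop_add_const_right _ _ tendsto_id).const_mul_atTop hs
  refine tendsto_atTop_mono' _ ?_ hlin
  filter_upwards [eventually_gt_atTop b] with t ht
  have := hg.slope_mono_adjacent (Set.mem_univ a) (Set.mem_univ t) hab ht
  rw [le_div_iff₀ (sub_pos.2 ht)] at this
  linarith

theorem Monotone.tendsto_atTop_of_strictConvexOn {g : ℝ → ℝ} (hmono : Monotone g)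
    (hg : StrictConvexOn ℝ Set.univ g) : Tendsto g atTop atTop := by
  have hmid := hg.2 (Set.mem_univ 0) (Set.mem_univ 1) zero_ne_one (half_pos one_pos)
    (half_pos one_pos) (add_halves 1)
  have h0 : g 0 ≤ g (1 / 2) := hmono (by norm_num)
  norm_num at hmid
  exact hg.convexOn.tendsto_atTop_of_lt zero_lt_one (by linarith)

section Cost

variable {d : ℕ} {τ R : ℝ}

theorem cost_eq_dist_sq (τ : ℝ) (x y : EuclideanSpace ℝ (Fin d)) :
    cost τ x y = τ * dist x y ^ 2 := by
  rw [cost, dist_eq_norm]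

theorem cost_comm (τ : ℝ) (x y : EuclideanSpace ℝ (Fin d)) : cost τ x y = cost τ y x := by
  rw [cost_eq_dist_sq, cost_eq_dist_sq, dist_comm]

theorem cost_nonneg (hτ : 0 ≤ τ) (x y : EuclideanSpace ℝ (Fin d)) : 0 ≤ cost τ x y := by
  rw [cost_eq_dist_sq]
  positivity

theorem cost_le_of_dist_le (hτ : 0 ≤ τ) {x y : EuclideanSpace ℝ (Fin d)} (h : dist x y ≤ R) :
    cost τ x y ≤ τ * R ^ 2 := by
  rw [cost_eq_dist_sq]
  gcongr

theorem cost_le_cost_add (hτ : 0 ≤ τ) {x x' z : EuclideanSpace ℝ (Fin d)}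
    (hx : dist x z ≤ R) (hx' : dist x' z ≤ R) :
    cost τ x z ≤ cost τ x' z + 2 * τ * R * dist x x' := by
  rw [cost_eq_dist_sq, cost_eq_dist_sq]
  have htri : dist x z ≤ dist x x' + dist x' z := dist_triangle _ _ _
  -- `a² - b² = (a - b)(a + b)` with `a - b ≤ dist x x'` and `a + b ≤ 2R`
  have hsq : dist x z ^ 2 - dist x' z ^ 2 ≤ 2 * R * dist x x' := by
    nlinarith [mul_nonneg (sub_nonneg.2 (sub_le_iff_le_add'.2 htri))
        (add_nonneg (dist_nonneg (x := x) (y := z)) (dist_nonneg (x := x') (y := z))),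
      mul_nonneg (by linarith : 0 ≤ 2 * R - (dist x z + dist x' z))
        (dist_nonneg (x := x) (y := x'))]
  nlinarith [mul_le_mul_of_nonneg_left hsq hτ]

end Cost

section CTransform

variable {d : ℕ} {τ R : ℝ} {X Y : Set (EuclideanSpace ℝ (Fin d))}
  {v : EuclideanSpace ℝ (Fin d) → ℝ}

theorem lipschitzOnWith_ctransform (hτ : 0 ≤ τ) (hR : ∀ x ∈ X, ∀ y ∈ Y, dist x y ≤ R)
    (hY : Y.Nonempty) (hv : BddAbove (v '' Y)) :
    LipschitzOnWith (2 * τ * R).toNNReal (ctransform τ Y v) X := by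
  obtain ⟨B, hB⟩ := hv
  refine LipschitzOnWith.csInf_image hY
    (fun x _ => bddBelow_image_sub (fun y _ => cost_nonneg hτ x y)
      fun y hy => hB (Set.mem_image_of_mem v hy))
    fun y hy => LipschitzOnWith.of_le_add_mul' _ fun x hx x' hx' => ?_
  linarith [cost_le_cost_add hτ (hR x hx y hy) (hR x' hx' y hy)]

theorem bddBelow_cctransform_image (hτ : 0 ≤ τ) (hu : BddAbove (ctransform τ Y v '' X))
    (y : EuclideanSpace ℝ (Fin d)) :
    BddBelow ((fun x => cost τ x y - ctransform τ Y v x) '' X) := by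
  obtain ⟨B, hB⟩ := hu
  exact bddBelow_image_sub (fun x _ => cost_nonneg hτ x y)
    fun x hx => hB (Set.mem_image_of_mem _ hx)

theorem cctransform_le (hτ : 0 ≤ τ) (hu : BddAbove (ctransform τ Y v '' X))
    {x : EuclideanSpace ℝ (Fin d)} (hx : x ∈ X) (y : EuclideanSpace ℝ (Fin d)) :
    cctransform τ X Y v y ≤ cost τ x y - ctransform τ Y v x :=
  csInf_le (bddBelow_cctransform_image hτ hu y) (Set.mem_image_of_mem _ hx)

theorem lipschitzOnWith_cctransform (hτ : 0 ≤ τ) (hR : ∀ x ∈ X, ∀ y ∈ Y, dist x y ≤ R)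
    (hX : X.Nonempty) (hu : BddAbove (ctransform τ Y v '' X)) :
    LipschitzOnWith (2 * τ * R).toNNReal (cctransform τ X Y v) Y := by
  refine LipschitzOnWith.csInf_image hX (fun y _ => bddBelow_cctransform_image hτ hu y)
    fun x hx => LipschitzOnWith.of_le_add_mul' _ fun y hy y' hy' => ?_
  have := cost_le_cost_add hτ (z := x) ((dist_comm y x).trans_le (hR x hx y hy))
    ((dist_comm y' x).trans_le (hR x hx y' hy'))
  rw [cost_comm τ y, cost_comm τ y'] at this
  linarith

end CTransform

section Probability

variable {α : Type*} [MeasurableSpace α] {μ : Measure α} [IsProbabilityMeasure μ] {s : Set α}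

theorem nonempty_of_prob_compl_eq_zero (hs : MeasurableSet s) (hμs : μ sᶜ = 0) : s.Nonempty :=
  nonempty_of_measure_ne_zero (μ := μ) <| by
    rw [(prob_compl_eq_zero_iff hs).1 hμs]
    exact one_ne_zero

theorem le_setIntegral_of_forall_mem_le (hs : MeasurableSet s) (hμs : μ sᶜ = 0) {f : α → ℝ}
    {c : ℝ} (hf : IntegrableOn f s μ) (hc : ∀ x ∈ s, c ≤ f x) : c ≤ ∫ x in s, f x ∂μ := by
  have h := setIntegral_ge_of_const_le_real hs (measure_ne_top μ s) hc hf
  rwa [Measure.real, (prob_compl_eq_zero_iff hs).1 hμs, ENNReal.toReal_one, mul_one] at h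

theorem exists_neg_lt_of_setIntegral_comp_neg_le (hs : MeasurableSet s) (hμs : μ sᶜ = 0)
    {g : ℝ → ℝ} (hg : Monotone g) {f : α → ℝ} {B T : ℝ}
    (hint : IntegrableOn (fun x => g (-f x)) s μ) (hB : ∫ x in s, g (-f x) ∂μ ≤ B)
    (hT : B < g T) : ∃ x ∈ s, -T < f x := by
  by_contra! hf
  have := le_setIntegral_of_forall_mem_le hs hμs hint fun x hx => hg (le_neg.2 (hf x hx))
  linarith

end Probability

section Semidual

variable {d : ℕ} {τ : ℝ} {X Y : Set (EuclideanSpace ℝ (Fin d))}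
  {μ ν : Measure (EuclideanSpace ℝ (Fin d))} [IsProbabilityMeasure μ] [IsProbabilityMeasure ν]
  {g₁ g₂ : ℝ → ℝ} {v : EuclideanSpace ℝ (Fin d) → ℝ}

theorem exists_neg_lt_of_semidual_nonpos (hX : IsCompact X) (hY : IsCompact Y)
    (hμX : μ Xᶜ = 0) (hνY : ν Yᶜ = 0) (hg₁ : Continuous g₁) (hg₂ : Continuous g₂)
    (hg₁mono : Monotone g₁) (hg₂mono : Monotone g₂) {b₁ b₂ T₁ T₂ : ℝ}
    (hb₁ : b₁ ∈ lowerBounds (Set.range g₁)) (hb₂ : b₂ ∈ lowerBounds (Set.range g₂))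
    (hT₁ : -b₂ < g₁ T₁) (hT₂ : -b₁ < g₂ T₂)
    (hu : ContinuousOn (ctransform τ Y v) X) (hv : ContinuousOn v Y)
    (hL : semidual τ X Y μ ν g₁ g₂ v ≤ 0) :
    (∃ x ∈ X, -T₁ < ctransform τ Y v x) ∧ ∃ y ∈ Y, -T₂ < v y := by
  have hint₁ : IntegrableOn (fun x => g₁ (-ctransform τ Y v x)) X μ :=
    (hg₁.comp_continuousOn hu.neg).integrableOn_compact hX
  have hint₂ : IntegrableOn (fun y => g₂ (-v y)) Y ν :=
    (hg₂.comp_continuousOn hv.neg).integrableOn_compact hY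
  have hI₁ := le_setIntegral_of_forall_mem_le hX.measurableSet hμX hint₁
    fun x _ => hb₁ ⟨_, rfl⟩
  have hI₂ := le_setIntegral_of_forall_mem_le hY.measurableSet hνY hint₂
    fun y _ => hb₂ ⟨_, rfl⟩
  rw [semidual] at hL
  exact ⟨exists_neg_lt_of_setIntegral_comp_neg_le hX.measurableSet hμX hg₁mono hint₁
      (by linarith) hT₁,
    exists_neg_lt_of_setIntegral_comp_neg_le hY.measurableSet hνY hg₂mono hint₂
      (by linarith) hT₂⟩

end Semidual

theorem semidual_candidate_set_equibounded_equilipschitz_general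
    {d : ℕ} (τ : ℝ) (hτ : 0 < τ)
    (X Y : Set (EuclideanSpace ℝ (Fin d))) (hX : IsCompact X) (hY : IsCompact Y)
    (μ ν : Measure (EuclideanSpace ℝ (Fin d)))
    [IsProbabilityMeasure μ] [IsProbabilityMeasure ν]
    (hμX : μ Xᶜ = 0) (hνY : ν Yᶜ = 0)
    (g₁ g₂ : ℝ → ℝ)
    (hg₁mono : Monotone g₁) (hg₂mono : Monotone g₂)
    (hg₁bdd : BddBelow (Set.range g₁)) (hg₂bdd : BddBelow (Set.range g₂))
    (hg₁conv : StrictConvexOn ℝ Set.univ g₁) (hg₂conv : StrictConvexOn ℝ Set.univ g₂) :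
    ∃ (M : ℝ) (L' : ℝ≥0), 0 ≤ M ∧
      ∀ v : EuclideanSpace ℝ (Fin d) → ℝ, ContinuousOn v Y →
        semidual τ X Y μ ν g₁ g₂ v ≤ 0 →
        (∀ y ∈ Y, cctransform τ X Y v y = v y) →
        (∀ y ∈ Y, |v y| ≤ M) ∧ LipschitzOnWith L' v Y := by
  obtain ⟨b₁, hb₁⟩ := hg₁bdd
  obtain ⟨b₂, hb₂⟩ := hg₂bdd
  obtain ⟨T₁, hT₁⟩ :=
    ((hg₁mono.tendsto_atTop_of_strictConvexOn hg₁conv).eventually_gt_atTop (-b₂)).exists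
  obtain ⟨T₂, hT₂⟩ :=
    ((hg₂mono.tendsto_atTop_of_strictConvexOn hg₂conv).eventually_gt_atTop (-b₁)).exists
  set R := Metric.diam (X ∪ Y)
  have hR : ∀ a ∈ X ∪ Y, ∀ b ∈ X ∪ Y, dist a b ≤ R := fun a ha b hb =>
    Metric.dist_le_diam_of_mem (hX.union hY).isBounded ha hb
  have hXY : ∀ x ∈ X, ∀ y ∈ Y, dist x y ≤ R := fun x hx y hy => hR x (.inl hx) y (.inr hy)
  set K := (2 * τ * R).toNNReal
  refine ⟨max |-(T₂ + K * R)| |τ * R ^ 2 + T₁|, K, le_max_of_le_left (abs_nonneg _),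
    fun v hv hL hvcc => ?_⟩
  have hu : LipschitzOnWith K (ctransform τ Y v) X := lipschitzOnWith_ctransform hτ.le hXY
    (nonempty_of_prob_compl_eq_zero hY.measurableSet hνY) (hY.bddAbove_image hv)
  have huX := hX.bddAbove_image hu.continuousOn
  have hvK : LipschitzOnWith K v Y := (lipschitzOnWith_cctransform hτ.le hXY
    (nonempty_of_prob_compl_eq_zero hX.measurableSet hμX) huX).congr hvcc
  obtain ⟨⟨x₁, hx₁, hux₁⟩, ⟨y₁, hy₁, hvy₁⟩⟩ := exists_neg_lt_of_semidual_nonpos hX hY hμX hνY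
    hg₁conv.convexOn.locallyLipschitz.continuous hg₂conv.convexOn.locallyLipschitz.continuous
    hg₁mono hg₂mono hb₁ hb₂ hT₁ hT₂ hu.continuousOn hv hL
  refine ⟨fun y hy => abs_le_max_abs_abs ?_ ?_, hvK⟩
  · have hdist : (K : ℝ) * dist y₁ y ≤ K * R := by
      gcongr
      exact hR y₁ (.inr hy₁) y (.inr hy)
    linarith [hvK.le_add_mul hy₁ hy]
  · linarith [hvcc y hy ▸ cctransform_le hτ.le huX hx₁ y,
      cost_le_of_dist_le hτ.le (hXY x₁ hx₁ y hy)]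

/-- If `g₁, g₂` are non-decreasing, bounded below, differentiable,
strictly convex, and normalized by `g₁(0) = g₂(0) = 0`, then the set
`Γ = { v ∈ C(Y) : L(v) ≤ 0, v^{cc} = v }` is equi-bounded and equi-Lipschitz. -/
theorem semidual_candidate_set_equibounded_equilipschitz
    {d : ℕ} (τ : ℝ) (hτ : 0 < τ)
    (X Y : Set (EuclideanSpace ℝ (Fin d))) (hX : IsCompact X) (hY : IsCompact Y)
    (μ ν : Measure (EuclideanSpace ℝ (Fin d)))
    [IsProbabilityMeasure μ] [IsProbabilityMeasure ν]
    (hμX : μ Xᶜ = 0) (hνY : ν Yᶜ = 0)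
    (g₁ g₂ : ℝ → ℝ)
    (hg₁mono : Monotone g₁) (hg₂mono : Monotone g₂)
    (hg₁bdd : BddBelow (Set.range g₁)) (hg₂bdd : BddBelow (Set.range g₂))
    (hg₁diff : Differentiable ℝ g₁) (hg₂diff : Differentiable ℝ g₂)
    (hg₁conv : StrictConvexOn ℝ Set.univ g₁) (hg₂conv : StrictConvexOn ℝ Set.univ g₂)
    (hg₁zero : g₁ 0 = 0) (hg₂zero : g₂ 0 = 0) :
    ∃ (M : ℝ) (L' : ℝ≥0), 0 ≤ M ∧
      ∀ v : EuclideanSpace ℝ (Fin d) → ℝ, ContinuousOn v Y →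
        semidual τ X Y μ ν g₁ g₂ v ≤ 0 →
        (∀ y ∈ Y, cctransform τ X Y v y = v y) →
        (∀ y ∈ Y, |v y| ≤ M) ∧ LipschitzOnWith L' v Y :=
  semidual_candidate_set_equibounded_equilipschitz_general τ hτ X Y hX hY μ ν hμX hνY g₁ g₂ hg₁mono
    hg₂mono hg₁bdd hg₂bdd hg₁conv hg₂conv

end
end

section
/- Assume g₁ : ℝ → ℝ is convex and non-decreasing and g₂ : ℝ → ℝ is strictly convex. Then the semi-dual functional L is convex on C(Y): for all v₁, v₂ ∈ C(Y) and t ∈ (0,1), L(t v₁ + (1−t) v₂) ≤ t L(v₁) + (1−t) L(v₂); moreover the inequality is strict whenever ν({ y ∈ Y : v₁(y) ≠ v₂(y) }) > 0. -/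
open MeasureTheory Filter
open scoped ENNReal NNReal Topology

noncomputable section

/-!
The `c`-transform is an infimum of functions affine in `v`, hence concave in `v`; composed with
negation and the non-decreasing convex `g₁` this makes the first term of `L` convex. The second
term is convex pointwise, strictly where `v₁ ≠ v₂`, and a pointwise inequality that is strict on
a set of positive measure stays strict after integration. Compactness of `Y` makes every
`c`-transform continuous, so all integrals involved are finite.
-/

section Integral

variable {α : Type*} [MeasurableSpace α] {μ : Measure α} {f g h : α → ℝ} {a b : ℝ}

lemma integral_lt_integral_of_ae_le_of_measure_setOfPred_lt_ne_zero
    (hf : Integrable f μ) (hg : Integrable g μ) (hle : f ≤ᵐ[μ] g)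
    (hlt : μ {x | f x < g x} ≠ 0) : ∫ x, f x ∂μ < ∫ x, g x ∂μ := by
  rw [← sub_pos, ← integral_sub hg hf, integral_pos_iff_support_of_nonneg_ae
    (hle.mono fun x => sub_nonneg.2) (hg.sub hf)]
  exact pos_iff_ne_zero.2 (mt (measure_mono_null fun x hx => (sub_pos.2 hx).ne') hlt)

lemma integral_convexCombo (hf : Integrable f μ) (hg : Integrable g μ) :
    ∫ x, (a * f x + b * g x) ∂μ = a * ∫ x, f x ∂μ + b * ∫ x, g x ∂μ := by
  rw [integral_add (hf.const_mul a) (hg.const_mul b), integral_const_mul, integral_const_mul]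

lemma integral_le_convexCombo (hf : Integrable f μ) (hg : Integrable g μ) (hh : Integrable h μ)
    (hle : ∀ᵐ x ∂μ, h x ≤ a * f x + b * g x) :
    ∫ x, h x ∂μ ≤ a * ∫ x, f x ∂μ + b * ∫ x, g x ∂μ :=
  integral_convexCombo (μ := μ) hf hg ▸
    integral_mono_ae hh ((hf.const_mul a).add (hg.const_mul b)) hle

lemma integral_lt_convexCombo (hf : Integrable f μ) (hg : Integrable g μ) (hh : Integrable h μ)
    (hle : ∀ᵐ x ∂μ, h x ≤ a * f x + b * g x)
    (hlt : μ {x | h x < a * f x + b * g x} ≠ 0) :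
    ∫ x, h x ∂μ < a * ∫ x, f x ∂μ + b * ∫ x, g x ∂μ :=
  integral_convexCombo (μ := μ) hf hg ▸
    integral_lt_integral_of_ae_le_of_measure_setOfPred_lt_ne_zero hh
      ((hf.const_mul a).add (hg.const_mul b)) hle hlt

end Integral

section NegComposition

variable {g : ℝ → ℝ} {a b : ℝ}

lemma ConvexOn.map_neg_convexCombo_le (hg : ConvexOn ℝ Set.univ g) (ha : 0 ≤ a) (hb : 0 ≤ b)
    (hab : a + b = 1) (p q : ℝ) : g (-(a * p + b * q)) ≤ a * g (-p) + b * g (-q) := by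
  rw [neg_add, ← mul_neg, ← mul_neg]
  exact hg.2 (Set.mem_univ (-p)) (Set.mem_univ (-q)) ha hb hab

lemma StrictConvexOn.map_neg_convexCombo_lt (hg : StrictConvexOn ℝ Set.univ g) (ha : 0 < a)
    (hb : 0 < b) (hab : a + b = 1) {p q : ℝ} (hpq : p ≠ q) :
    g (-(a * p + b * q)) < a * g (-p) + b * g (-q) := by
  rw [neg_add, ← mul_neg, ← mul_neg]
  exact hg.2 (Set.mem_univ (-p)) (Set.mem_univ (-q)) (neg_injective.ne hpq) ha hb hab

end NegComposition

section CTransform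

variable {d : ℕ} {τ : ℝ} {Y : Set (EuclideanSpace ℝ (Fin d))}
  {v v₁ v₂ : EuclideanSpace ℝ (Fin d) → ℝ}

@[fun_prop]
lemma Continuous.cost {β : Type*} [TopologicalSpace β] {f g : β → EuclideanSpace ℝ (Fin d)}
    (hf : Continuous f) (hg : Continuous g) : Continuous fun b => cost τ (f b) (g b) := by
  unfold _root_.cost
  fun_prop

lemma ctransform_le (hY : IsCompact Y) (hv : ContinuousOn v Y) {x y : EuclideanSpace ℝ (Fin d)}
    (hy : y ∈ Y) : ctransform τ Y v x ≤ cost τ x y - v y :=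
  csInf_le (hY.bddBelow_image (by fun_prop)) ⟨y, hy, rfl⟩

lemma continuous_ctransform (hY : IsCompact Y) (hv : ContinuousOn v Y) :
    Continuous (ctransform τ Y v) := by
  -- `IsCompact.continuous_sInf` wants a jointly continuous function, but `v` is only
  -- continuous on `Y`: pass to the subtype.
  have : CompactSpace Y := isCompact_iff_compactSpace.1 hY
  have hrestrict : ctransform τ Y v =
      fun x => sInf ((fun y : Y => cost τ x y - Y.domRestrict v y) '' Set.univ) := by
    ext x
    rw [Set.image_univ, ctransform, Set.image_eq_range]
    rfl
  rw [hrestrict]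
  exact isCompact_univ.continuous_sInf <|
    (continuous_fst.cost (continuous_subtype_val.comp continuous_snd)).sub
      (hv.domRestrict.comp continuous_snd)

lemma convexCombo_ctransform_le (hY : IsCompact Y) (hv₁ : ContinuousOn v₁ Y)
    (hv₂ : ContinuousOn v₂ Y) {a b : ℝ} (ha : 0 ≤ a) (hb : 0 ≤ b) (hab : a + b = 1)
    (x : EuclideanSpace ℝ (Fin d)) :
    a * ctransform τ Y v₁ x + b * ctransform τ Y v₂ x ≤
      ctransform τ Y (fun y => a * v₁ y + b * v₂ y) x := by
  rcases Y.eq_empty_or_nonempty with rfl | hYne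
  · simp [ctransform] -- every `c`-transform is `sInf ∅ = 0`
  refine le_csInf (hYne.image _) ?_
  rintro _ ⟨y, hy, rfl⟩
  calc a * ctransform τ Y v₁ x + b * ctransform τ Y v₂ x
      ≤ a * (cost τ x y - v₁ y) + b * (cost τ x y - v₂ y) := by
        gcongr
        exacts [ctransform_le hY hv₁ hy, ctransform_le hY hv₂ hy]
    _ = cost τ x y - (a * v₁ y + b * v₂ y) := by linear_combination cost τ x y * hab

lemma Monotone.map_neg_ctransform_convexCombo_le {g : ℝ → ℝ} (hmono : Monotone g)
    (hconv : ConvexOn ℝ Set.univ g) (hY : IsCompact Y) (hv₁ : ContinuousOn v₁ Y)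
    (hv₂ : ContinuousOn v₂ Y) {a b : ℝ} (ha : 0 ≤ a) (hb : 0 ≤ b) (hab : a + b = 1)
    (x : EuclideanSpace ℝ (Fin d)) :
    g (-ctransform τ Y (fun y => a * v₁ y + b * v₂ y) x) ≤
      a * g (-ctransform τ Y v₁ x) + b * g (-ctransform τ Y v₂ x) :=
  (hmono (neg_le_neg (convexCombo_ctransform_le hY hv₁ hv₂ ha hb hab x))).trans
    (hconv.map_neg_convexCombo_le ha hb hab _ _)

lemma integrableOn_comp_neg_ctransform {X : Set (EuclideanSpace ℝ (Fin d))}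
    {μ : Measure (EuclideanSpace ℝ (Fin d))} [IsFiniteMeasureOnCompacts μ] {g : ℝ → ℝ}
    (hg : Continuous g) (hX : IsCompact X) (hY : IsCompact Y) (hv : ContinuousOn v Y) :
    IntegrableOn (fun x => g (-ctransform τ Y v x)) X μ :=
  (hg.comp (continuous_ctransform hY hv).neg).continuousOn.integrableOn_compact hX

end CTransform

theorem semidual_convex_general
    {d : ℕ} (τ : ℝ)
    (X Y : Set (EuclideanSpace ℝ (Fin d))) (hX : IsCompact X) (hY : IsCompact Y)
    (μ ν : Measure (EuclideanSpace ℝ (Fin d)))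
    [IsProbabilityMeasure μ] [IsProbabilityMeasure ν]
    (g₁ g₂ : ℝ → ℝ)
    (hg₁conv : ConvexOn ℝ Set.univ g₁) (hg₁mono : Monotone g₁)
    (hg₂conv : StrictConvexOn ℝ Set.univ g₂)
    (v₁ v₂ : EuclideanSpace ℝ (Fin d) → ℝ) (hv₁ : ContinuousOn v₁ Y) (hv₂ : ContinuousOn v₂ Y)
    (t : ℝ) (ht₀ : 0 < t) (ht₁ : t < 1) :
    semidual τ X Y μ ν g₁ g₂ (fun y => t * v₁ y + (1 - t) * v₂ y) ≤
        t * semidual τ X Y μ ν g₁ g₂ v₁ + (1 - t) * semidual τ X Y μ ν g₁ g₂ v₂ ∧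
      (0 < ν {y ∈ Y | v₁ y ≠ v₂ y} →
        semidual τ X Y μ ν g₁ g₂ (fun y => t * v₁ y + (1 - t) * v₂ y) <
          t * semidual τ X Y μ ν g₁ g₂ v₁ + (1 - t) * semidual τ X Y μ ν g₁ g₂ v₂) := by
  have ht₁' : 0 < 1 - t := sub_pos.2 ht₁
  have hab : t + (1 - t) = 1 := add_sub_cancel t 1
  have hg₁ : Continuous g₁ := continuousOn_univ.1 (hg₁conv.continuousOn isOpen_univ)
  have hg₂ : Continuous g₂ := continuousOn_univ.1 (hg₂conv.convexOn.continuousOn isOpen_univ)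
  have hw : ContinuousOn (fun y => t * v₁ y + (1 - t) * v₂ y) Y := by fun_prop
  have hint₁ {v} (hv : ContinuousOn v Y) : IntegrableOn (fun x => g₁ (-ctransform τ Y v x)) X μ :=
    integrableOn_comp_neg_ctransform hg₁ hX hY hv
  have hint₂ {v} (hv : ContinuousOn v Y) : IntegrableOn (fun y => g₂ (-v y)) Y ν :=
    (hg₂.comp_continuousOn hv.neg).integrableOn_compact hY
  have hν_pt (y) := hg₂conv.convexOn.map_neg_convexCombo_le ht₀.le ht₁'.le hab (v₁ y) (v₂ y)
  have hμ_le := integral_le_convexCombo (hint₁ hv₁) (hint₁ hv₂) (hint₁ hw) <| ae_of_all _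
    (hg₁mono.map_neg_ctransform_convexCombo_le hg₁conv hY hv₁ hv₂ ht₀.le ht₁'.le hab)
  have hν_le := integral_le_convexCombo (hint₂ hv₁) (hint₂ hv₂) (hint₂ hw) (ae_of_all _ hν_pt)
  refine ⟨by unfold semidual; linarith, fun hpos => ?_⟩
  have hν_strict : ν.restrict Y {y | g₂ (-(t * v₁ y + (1 - t) * v₂ y)) <
      t * g₂ (-v₁ y) + (1 - t) * g₂ (-v₂ y)} ≠ 0 := by
    refine (hpos.trans_le <| (measure_mono fun y hy => ?_).trans
      (Measure.le_restrict_apply _ _)).ne'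
    exact ⟨hg₂conv.map_neg_convexCombo_lt ht₀ ht₁' hab hy.2, hy.1⟩
  have hν_lt := integral_lt_convexCombo (hint₂ hv₁) (hint₂ hv₂) (hint₂ hw) (ae_of_all _ hν_pt)
    hν_strict
  unfold semidual
  linarith

/-- If `g₁` is convex and non-decreasing and `g₂` is strictly convex,
then the semi-dual functional `L` is convex on `C(Y)`, and strictly convex along pairs
`v₁, v₂` that differ on a set of positive `ν`-measure. -/
theorem semidual_convex
    {d : ℕ} (τ : ℝ) (hτ : 0 < τ)
    (X Y : Set (EuclideanSpace ℝ (Fin d))) (hX : IsCompact X) (hY : IsCompact Y)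
    (μ ν : Measure (EuclideanSpace ℝ (Fin d)))
    [IsProbabilityMeasure μ] [IsProbabilityMeasure ν]
    (hμX : μ Xᶜ = 0) (hνY : ν Yᶜ = 0)
    (g₁ g₂ : ℝ → ℝ)
    (hg₁conv : ConvexOn ℝ Set.univ g₁) (hg₁mono : Monotone g₁)
    (hg₂conv : StrictConvexOn ℝ Set.univ g₂)
    (v₁ v₂ : EuclideanSpace ℝ (Fin d) → ℝ) (hv₁ : ContinuousOn v₁ Y) (hv₂ : ContinuousOn v₂ Y)
    (t : ℝ) (ht₀ : 0 < t) (ht₁ : t < 1) :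
    semidual τ X Y μ ν g₁ g₂ (fun y => t * v₁ y + (1 - t) * v₂ y) ≤
        t * semidual τ X Y μ ν g₁ g₂ v₁ + (1 - t) * semidual τ X Y μ ν g₁ g₂ v₂ ∧
      (0 < ν {y ∈ Y | v₁ y ≠ v₂ y} →
        semidual τ X Y μ ν g₁ g₂ (fun y => t * v₁ y + (1 - t) * v₂ y) <
          t * semidual τ X Y μ ν g₁ g₂ v₁ + (1 - t) * semidual τ X Y μ ν g₁ g₂ v₂) :=
  semidual_convex_general τ X Y hX hY μ ν g₁ g₂ hg₁conv hg₁mono hg₂conv v₁ v₂ hv₁ hv₂ t ht₀ ht₁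
end
end

section
/- Let Ψ₁, Ψ₂ be entropy functions and let α > 0. If π^α is a finite positive Borel measure on X×Y attaining C_ub^α(μ,ν), then its marginal discrepancies satisfy D_{Ψ₁}(π₀^α|μ) + D_{Ψ₂}(π₁^α|ν) ≤ C(μ,ν)/α = (1/α) inf_{π∈Π(μ,ν)} ∫ τ‖x−y‖₂² dπ(x,y). -/
open MeasureTheory Filter
open scoped ENNReal NNReal Topology Classical

noncomputable section

/-- An entropy function `Ψ : ℝ → [0,∞]`: convex, lower semicontinuous, non-negative
(automatic from the codomain), `Ψ(x) = ∞` for `x < 0`, `Ψ(1) = 0`, and superlinear. -/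
structure IsEntropy (Ψ : ℝ → ℝ≥0∞) : Prop where
  convex : ∀ x y : ℝ, ∀ t : ℝ, 0 ≤ t → t ≤ 1 →
    Ψ (t * x + (1 - t) * y) ≤ ENNReal.ofReal t * Ψ x + ENNReal.ofReal (1 - t) * Ψ y
  lsc : LowerSemicontinuous Ψ
  eq_top_of_neg : ∀ x : ℝ, x < 0 → Ψ x = ∞
  one_eq_zero : Ψ 1 = 0
  superlinear : Tendsto (fun t : ℝ => Ψ t / ENNReal.ofReal t) atTop (𝓝 ∞)

/-- The Csiszár divergence `D_Ψ(ρ|σ) = ∫ Ψ(dρ/dσ) dσ` if `ρ ≪ σ`, and `∞` otherwise. -/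
def csiszar {Z : Type*} [MeasurableSpace Z] (Ψ : ℝ → ℝ≥0∞) (ρ σ : Measure Z) : ℝ≥0∞ :=
  if ρ ≪ σ then ∫⁻ z, Ψ ((ρ.rnDeriv σ z).toReal) ∂σ else ∞

/-- The objective of the `α`-scaled unbalanced optimal transport problem:
`∫ c dπ + α D_{Ψ₁}(π₀|μ) + α D_{Ψ₂}(π₁|ν)`. -/
def uotObj {d : ℕ} (τ α : ℝ) (Ψ₁ Ψ₂ : ℝ → ℝ≥0∞)
    (μ ν : Measure (EuclideanSpace ℝ (Fin d)))
    (π : Measure (EuclideanSpace ℝ (Fin d) × EuclideanSpace ℝ (Fin d))) : ℝ≥0∞ :=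
  (∫⁻ z, ENNReal.ofReal (cost τ z.1 z.2) ∂π)
    + ENNReal.ofReal α * csiszar Ψ₁ (π.map Prod.fst) μ
    + ENNReal.ofReal α * csiszar Ψ₂ (π.map Prod.snd) ν

/-- The `α`-scaled unbalanced optimal transport cost `C_ub^α(μ,ν)`, the infimum of the
objective over finite positive Borel measures `π` supported on `X × Y`. -/
def UOTcost {d : ℕ} (τ α : ℝ) (Ψ₁ Ψ₂ : ℝ → ℝ≥0∞) (X Y : Set (EuclideanSpace ℝ (Fin d)))
    (μ ν : Measure (EuclideanSpace ℝ (Fin d))) : ℝ≥0∞ :=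
  ⨅ (π : Measure (EuclideanSpace ℝ (Fin d) × EuclideanSpace ℝ (Fin d)))
    (_ : IsFiniteMeasure π) (_ : π ((X ×ˢ Y)ᶜ) = 0), uotObj τ α Ψ₁ Ψ₂ μ ν π

/-- The optimal transport cost `C(μ,ν) = inf_{π ∈ Π(μ,ν)} ∫ c dπ`. -/
def OTcost {d : ℕ} (τ : ℝ) (μ ν : Measure (EuclideanSpace ℝ (Fin d))) : ℝ≥0∞ :=
  ⨅ (π : Measure (EuclideanSpace ℝ (Fin d) × EuclideanSpace ℝ (Fin d)))
    (_ : π.map Prod.fst = μ ∧ π.map Prod.snd = ν),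
    ∫⁻ z, ENNReal.ofReal (cost τ z.1 z.2) ∂π

/-! Every coupling of `μ` and `ν` is admissible for the unbalanced problem, and both of its
divergences vanish because `Ψᵢ(1) = 0`; so `C_ub^α(μ,ν) ≤ C(μ,ν)`. At a minimizer, dropping the
non-negative transport term gives `α (D_{Ψ₁} + D_{Ψ₂}) ≤ C_ub^α(μ,ν)`. -/

theorem csiszar_self {Z : Type*} [MeasurableSpace Z] {Ψ : ℝ → ℝ≥0∞} (hΨ : Ψ 1 = 0)
    (μ : Measure Z) [SigmaFinite μ] : csiszar Ψ μ μ = 0 := by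
  rw [csiszar, if_pos Measure.AbsolutelyContinuous.rfl]
  refine lintegral_eq_zero_of_ae_eq_zero ?_
  filter_upwards [Measure.rnDeriv_self μ] with z hz
  simpa [hz] using hΨ

theorem measure_compl_prod_eq_zero_of_map {α β : Type*} [MeasurableSpace α] [MeasurableSpace β]
    {π : Measure (α × β)} {s : Set α} {t : Set β}
    (hs : π.map Prod.fst sᶜ = 0) (ht : π.map Prod.snd tᶜ = 0) : π (s ×ˢ t)ᶜ = 0 := by
  rw [Set.compl_prod_eq_union, measure_union_null_iff, Set.prod_univ, Set.univ_prod]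
  exact ⟨Measure.preimage_null_of_map_null measurable_fst.aemeasurable hs,
    Measure.preimage_null_of_map_null measurable_snd.aemeasurable ht⟩

section

variable {d : ℕ} {τ α : ℝ} {Ψ₁ Ψ₂ : ℝ → ℝ≥0∞} {μ ν : Measure (EuclideanSpace ℝ (Fin d))}

theorem uotObj_eq_lintegral_cost_of_map [SigmaFinite μ] [SigmaFinite ν]
    (hΨ₁ : Ψ₁ 1 = 0) (hΨ₂ : Ψ₂ 1 = 0)
    {π : Measure (EuclideanSpace ℝ (Fin d) × EuclideanSpace ℝ (Fin d))}
    (h₁ : π.map Prod.fst = μ) (h₂ : π.map Prod.snd = ν) :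
    uotObj τ α Ψ₁ Ψ₂ μ ν π = ∫⁻ z, ENNReal.ofReal (cost τ z.1 z.2) ∂π := by
  rw [uotObj, h₁, h₂, csiszar_self hΨ₁, csiszar_self hΨ₂, mul_zero, add_zero, add_zero]

theorem UOTcost_le_OTcost [IsFiniteMeasure μ] [IsFiniteMeasure ν]
    (hΨ₁ : Ψ₁ 1 = 0) (hΨ₂ : Ψ₂ 1 = 0) {X Y : Set (EuclideanSpace ℝ (Fin d))}
    (hμX : μ Xᶜ = 0) (hνY : ν Yᶜ = 0) :
    UOTcost τ α Ψ₁ Ψ₂ X Y μ ν ≤ OTcost τ μ ν := by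
  refine le_iInf₂ fun π ⟨h₁, h₂⟩ => ?_
  have hfin : IsFiniteMeasure π := by
    have : IsFiniteMeasure (π.map Prod.fst) := h₁ ▸ inferInstance
    exact Measure.isFiniteMeasure_of_map measurable_fst.aemeasurable
  have hsupp : π (X ×ˢ Y)ᶜ = 0 := measure_compl_prod_eq_zero_of_map (h₁ ▸ hμX) (h₂ ▸ hνY)
  calc UOTcost τ α Ψ₁ Ψ₂ X Y μ ν ≤ uotObj τ α Ψ₁ Ψ₂ μ ν π :=
        iInf_le_of_le π <| iInf_le_of_le hfin <| iInf_le _ hsupp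
    _ = _ := uotObj_eq_lintegral_cost_of_map hΨ₁ hΨ₂ h₁ h₂

theorem mul_csiszar_add_csiszar_le_uotObj
    (π : Measure (EuclideanSpace ℝ (Fin d) × EuclideanSpace ℝ (Fin d))) :
    ENNReal.ofReal α * (csiszar Ψ₁ (π.map Prod.fst) μ + csiszar Ψ₂ (π.map Prod.snd) ν)
      ≤ uotObj τ α Ψ₁ Ψ₂ μ ν π := by
  rw [uotObj, add_assoc, mul_add]
  exact le_add_self

end

theorem uot_minimizer_marginal_bound_general
    {d : ℕ} (τ : ℝ)
    (X Y : Set (EuclideanSpace ℝ (Fin d)))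
    (μ ν : Measure (EuclideanSpace ℝ (Fin d)))
    [IsProbabilityMeasure μ] [IsProbabilityMeasure ν]
    (hμX : μ Xᶜ = 0) (hνY : ν Yᶜ = 0)
    (Ψ₁ Ψ₂ : ℝ → ℝ≥0∞) (hΨ₁ : IsEntropy Ψ₁) (hΨ₂ : IsEntropy Ψ₂)
    (α : ℝ) (hα : 0 < α)
    (π : Measure (EuclideanSpace ℝ (Fin d) × EuclideanSpace ℝ (Fin d)))
    (hπmin : uotObj τ α Ψ₁ Ψ₂ μ ν π = UOTcost τ α Ψ₁ Ψ₂ X Y μ ν) :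
    csiszar Ψ₁ (π.map Prod.fst) μ + csiszar Ψ₂ (π.map Prod.snd) ν
      ≤ OTcost τ μ ν / ENNReal.ofReal α := by
  rw [ENNReal.le_div_iff_mul_le (.inl (ENNReal.ofReal_pos.2 hα).ne') (.inl ENNReal.ofReal_ne_top),
    mul_comm]
  calc _ ≤ uotObj τ α Ψ₁ Ψ₂ μ ν π := mul_csiszar_add_csiszar_le_uotObj π
    _ = UOTcost τ α Ψ₁ Ψ₂ X Y μ ν := hπmin
    _ ≤ OTcost τ μ ν := UOTcost_le_OTcost hΨ₁.one_eq_zero hΨ₂.one_eq_zero hμX hνY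

/-- If `π^α` attains `C_ub^α(μ,ν)`, then its marginal discrepancies
satisfy `D_Ψ₁(π₀^α|μ) + D_Ψ₂(π₁^α|ν) ≤ C(μ,ν)/α`. -/
theorem uot_minimizer_marginal_bound
    {d : ℕ} (τ : ℝ) (hτ : 0 < τ)
    (X Y : Set (EuclideanSpace ℝ (Fin d))) (hX : IsCompact X) (hY : IsCompact Y)
    (μ ν : Measure (EuclideanSpace ℝ (Fin d)))
    [IsProbabilityMeasure μ] [IsProbabilityMeasure ν]
    (hμX : μ Xᶜ = 0) (hνY : ν Yᶜ = 0)
    (Ψ₁ Ψ₂ : ℝ → ℝ≥0∞) (hΨ₁ : IsEntropy Ψ₁) (hΨ₂ : IsEntropy Ψ₂)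
    (α : ℝ) (hα : 0 < α)
    (π : Measure (EuclideanSpace ℝ (Fin d) × EuclideanSpace ℝ (Fin d))) (hπfin : IsFiniteMeasure π)
    (hπsupp : π ((X ×ˢ Y)ᶜ) = 0)
    (hπmin : uotObj τ α Ψ₁ Ψ₂ μ ν π = UOTcost τ α Ψ₁ Ψ₂ X Y μ ν) :
    csiszar Ψ₁ (π.map Prod.fst) μ + csiszar Ψ₂ (π.map Prod.snd) ν
      ≤ OTcost τ μ ν / ENNReal.ofReal α :=
  uot_minimizer_marginal_bound_general τ X Y μ ν hμX hνY Ψ₁ Ψ₂ hΨ₁ hΨ₂ α hα π hπmin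

end
end
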